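/- arXiv:1811.04399 — 5 statements merged into one kernel-verified Lean document; each statement's English description precedes it below -/
import Mathlib

section
/- For coprime positive integers r, b with b ≥ 2, one has c₀(r/b) = (1/r)·c₀(1/b) - (1/r)·Q(r/b), where Q(r/b) = ∑_{m=1}^{b-1} cot(πmr/b)·⌊rm/b⌋. -/
/-! Multiplication by `r` permutes the nonzero residues mod `b`, so `c₀(1/b)` can be reindexed
by `k = r m mod b`. Since `k / b = r m / b - ⌊r m / b⌋` and `cot` has period `π`, the term
`(k/b) cot(π k / b)` equals `(r m / b - ⌊r m / b⌋) cot(π m r / b)`; summing gives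
`c₀(1/b) = r c₀(r/b) + Q(r/b)`. -/

open Real Finset

/-- The cotangent sum `c₀(r/b) = -∑_{m=1}^{b-1} (m/b) cot(π m r / b)`. -/
noncomputable def c0 (r b : ℕ) : ℝ :=
  -∑ m ∈ Finset.Ico 1 b, (m / b : ℝ) * Real.cot (π * m * r / b)

/-- `Q(r/b) = ∑_{m=1}^{b-1} cot(π m r / b) ⌊r m / b⌋`. -/
noncomputable def Qsum (r b : ℕ) : ℝ :=
  ∑ m ∈ Finset.Ico 1 b, Real.cot (π * m * r / b) * ⌊(r * m : ℝ) / b⌋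

theorem Real.cot_periodic : Function.Periodic cot π := fun x => by
  simp only [cot_eq_cos_div_sin, cos_add_pi, sin_add_pi, neg_div_neg_eq]

theorem Real.cot_pi_mul_fract (x : ℝ) : cot (π * Int.fract x) = cot (π * x) := by
  rw [Int.fract, mul_sub, mul_comm π (⌊x⌋ : ℝ), cot_periodic.sub_int_mul_eq]

theorem Nat.Coprime.mul_mod_mem_Ico {r b m : ℕ} (hrb : r.Coprime b) (hm : m ∈ Ico 1 b) :
    r * m % b ∈ Ico 1 b := by
  rw [mem_Ico] at hm ⊢
  refine ⟨Nat.pos_of_ne_zero fun h => ?_, Nat.mod_lt _ (by omega)⟩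
  have hbm : b ∣ m := hrb.symm.dvd_of_dvd_mul_left (Nat.dvd_of_mod_eq_zero h)
  exact absurd (Nat.le_of_dvd (by omega) hbm) (by omega)

theorem Nat.Coprime.sum_Ico_comp_mul_mod {M : Type*} [AddCommMonoid M] {r b : ℕ}
    (hrb : r.Coprime b) (f : ℕ → M) :
    ∑ m ∈ Ico 1 b, f (r * m % b) = ∑ m ∈ Ico 1 b, f m := by
  have hmaps : Set.MapsTo (fun m => r * m % b) (Ico 1 b : Set ℕ) (Ico 1 b) :=
    fun m hm => hrb.mul_mod_mem_Ico hm
  have hinj : Set.InjOn (fun m => r * m % b) (Ico 1 b : Set ℕ) := by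
    intro m hm m' hm' h
    simp only [coe_Ico, Set.mem_Ico] at hm hm'
    have := Nat.ModEq.cancel_left_of_coprime hrb.symm h
    rwa [Nat.ModEq, Nat.mod_eq_of_lt hm.2, Nat.mod_eq_of_lt hm'.2] at this
  exact sum_nbij _ (fun m hm => hmaps hm) hinj
    ((Finset.finite_toSet _).injOn_iff_bijOn_of_mapsTo hmaps |>.mp hinj).surjOn fun _ _ => rfl

theorem c0_one_eq_mul_c0_add_Qsum {r b : ℕ} (hrb : r.Coprime b) :
    c0 1 b = r * c0 r b + Qsum r b := by
  have hfract (m : ℕ) : ((r * m % b : ℕ) : ℝ) / b = Int.fract ((r * m : ℝ) / b) := by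
    rw [← Nat.cast_mul, Int.fract_div_natCast_eq_div_natCast_mod]
  have hterm (m : ℕ) : ((r * m % b : ℕ) : ℝ) / b * cot (π * (r * m % b : ℕ) / b)
      = r * (m / b * cot (π * m * r / b)) - cot (π * m * r / b) * ⌊(r * m : ℝ) / b⌋ := by
    rw [mul_div_assoc, hfract, cot_pi_mul_fract, Int.fract]
    ring_nf
  unfold c0 Qsum
  rw [← hrb.sum_Ico_comp_mul_mod]
  simp only [Nat.cast_one, mul_one, hterm, sum_sub_distrib, ← mul_sum]
  ring

theorem c0_eq_c0_one_sub_Q_general (r b : ℕ) (hr : 0 < r)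
    (hrb : Nat.Coprime r b) :
    c0 r b = (1 / r : ℝ) * c0 1 b - (1 / r : ℝ) * Qsum r b := by
  rw [c0_one_eq_mul_c0_add_Qsum hrb]
  field_simp
  ring

/-- For coprime positive integers `r, b` with `b ≥ 2`,
`c₀(r/b) = (1/r) c₀(1/b) - (1/r) Q(r/b)`. -/
theorem c0_eq_c0_one_sub_Q (r b : ℕ) (hr : 0 < r) (hb : 2 ≤ b)
    (hrb : Nat.Coprime r b) :
    c0 r b = (1 / r : ℝ) * c0 1 b - (1 / r : ℝ) * Qsum r b :=
  c0_eq_c0_one_sub_Q_general r b hr hrb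
end

section
/- The Dedekind sum reciprocity formula: for coprime positive integers r, b, s(r/b) + s(b/r) = -1/4 + (1/12)(r/b + b/r + 1/(rb)). -/
open Finset
open scoped Classical

/-- The sawtooth function `((x))`. -/
noncomputable def sawtooth (x : ℝ) : ℝ :=
  if _ : ∃ n : ℤ, x = n then 0 else Int.fract x - 1 / 2

/-- The Dedekind sum `s(r/b) = ∑_{μ=1}^{b} ((rμ/b)) ((μ/b))`. -/
noncomputable def dedekindSum (r b : ℕ) : ℝ :=
  ∑ μ ∈ Finset.Icc 1 b, sawtooth ((r * μ : ℝ) / b) * sawtooth ((μ : ℝ) / b)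

/-!
For coprime `h, k` and `0 < μ < k` write `hμ = k q_μ + r_μ` with `0 < r_μ < k`. Then
`((hμ/k)) = r_μ/k - 1/2`, so `s(h/k)` is a polynomial expression in the power sums of `μ`, in
`∑ q_μ` and in `F(h,k) = ∑ μ q_μ`. Since the residues `r_μ` permute `1, …, k-1`, squaring
`hμ = k q_μ + r_μ` gives `2hk F(h,k) + ∑ μ² = h² ∑ μ² + k² ∑ q_μ²`, while counting the lattice points
`(μ, ν)` with `kν < hμ`, weighted by `2ν - 1`, expresses `∑ q_μ²` through `F(k,h)`. Eliminating
`∑ q_μ²` yields the symmetric identity `12 (h F(h,k) + k F(k,h)) = (h-1)(k-1)(8hk-h-k-1)`, which is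
the reciprocity law.
-/

namespace DedekindSum

theorem sum_Ico_id_mul_two (n : ℕ) : (∑ μ ∈ Ico 1 n, μ) * 2 = n * (n - 1) := by
  induction n with
  | zero => rfl
  | succ n ih =>
    rcases n with _ | n
    · rfl
    rw [sum_Ico_succ_top (by omega), add_mul, ih]
    grind

theorem sum_Ico_sq_mul_six (n : ℕ) : (∑ μ ∈ Ico 1 n, μ ^ 2) * 6 = n * (n - 1) * (2 * n - 1) := by
  induction n with
  | zero => rfl
  | succ n ih =>
    rcases n with _ | n
    · rfl
    rw [sum_Ico_succ_top (by omega), add_mul, ih]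
    grind

theorem sum_Ico_odd (n : ℕ) : ∑ ν ∈ Ico 1 n, (2 * ν - 1) = (n - 1) ^ 2 := by
  induction n with
  | zero => rfl
  | succ n ih =>
    rcases n with _ | n
    · rfl
    rw [sum_Ico_succ_top (by omega), ih]
    grind

variable {h k : ℕ}

theorem not_dvd_mul_of_coprime (hc : h.Coprime k) {μ : ℕ} (hμ : μ ∈ Ico 1 k) : ¬ k ∣ h * μ := by
  rw [mem_Ico] at hμ
  exact fun hd => Nat.not_dvd_of_pos_of_lt hμ.1 hμ.2 (hc.symm.dvd_of_dvd_mul_left hd)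

theorem sum_Ico_mul_mod {M : Type*} [AddCommMonoid M] (hc : h.Coprime k) (f : ℕ → M) :
    ∑ μ ∈ Ico 1 k, f (h * μ % k) = ∑ μ ∈ Ico 1 k, f μ := by
  have maps : ∀ μ ∈ Ico 1 k, h * μ % k ∈ Ico 1 k := fun μ hμ => by
    have hpos : 0 < h * μ % k := Nat.pos_of_ne_zero fun h0 =>
      not_dvd_mul_of_coprime hc hμ (Nat.dvd_of_mod_eq_zero h0)
    exact mem_Ico.2 ⟨hpos, Nat.mod_lt _ (by grind)⟩
  have inj : Set.InjOn (h * · % k) (Ico 1 k) := fun μ hμ ν hν hμν => by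
    simp only [coe_Ico, Set.mem_Ico] at hμ hν
    exact Nat.ModEq.eq_of_lt_of_lt (Nat.ModEq.cancel_left_of_coprime hc.symm hμν) hμ.2 hν.2
  exact sum_nbij _ maps inj (surjOn_of_injOn_of_card_le _ maps inj le_rfl) fun _ _ => rfl

theorem sum_Ico_div_mul_two (hc : h.Coprime k) :
    (∑ μ ∈ Ico 1 k, h * μ / k) * 2 = (h - 1) * (k - 1) := by
  rcases Nat.eq_zero_or_pos k with rfl | hk
  · rfl
  have hdiv : k * ∑ μ ∈ Ico 1 k, h * μ / k + ∑ μ ∈ Ico 1 k, μ = h * ∑ μ ∈ Ico 1 k, μ := by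
    calc k * ∑ μ ∈ Ico 1 k, h * μ / k + ∑ μ ∈ Ico 1 k, μ
        = ∑ μ ∈ Ico 1 k, (k * (h * μ / k) + h * μ % k) := by
          rw [sum_add_distrib, mul_sum, sum_Ico_mul_mod hc fun μ => μ]
      _ = h * ∑ μ ∈ Ico 1 k, μ := by
          rw [mul_sum]; exact sum_congr rfl fun μ _ => Nat.div_add_mod _ _
  have hkP : k * ∑ μ ∈ Ico 1 k, h * μ / k = (h - 1) * ∑ μ ∈ Ico 1 k, μ := by
    rw [Nat.sub_one_mul]; omega
  apply Nat.eq_of_mul_eq_mul_left hk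
  rw [← mul_assoc, hkP, mul_assoc, sum_Ico_id_mul_two]
  ring

def weightedFloorSum (h k : ℕ) : ℕ := ∑ μ ∈ Ico 1 k, μ * (h * μ / k)

theorem two_mul_mul_weightedFloorSum_add_sum_sq (hc : h.Coprime k) :
    2 * h * k * weightedFloorSum h k + ∑ μ ∈ Ico 1 k, μ ^ 2 =
      h ^ 2 * ∑ μ ∈ Ico 1 k, μ ^ 2 + k ^ 2 * ∑ μ ∈ Ico 1 k, (h * μ / k) ^ 2 := by
  have pointwise (μ : ℕ) :
      2 * h * k * (μ * (h * μ / k)) + (h * μ % k) ^ 2 = h ^ 2 * μ ^ 2 + k ^ 2 * (h * μ / k) ^ 2 := by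
    set q := h * μ / k
    set r := h * μ % k
    have hqr : k * q + r = h * μ := Nat.div_add_mod _ _
    rw [show 2 * h * k * (μ * q) = 2 * k * q * (h * μ) by ring,
      show h ^ 2 * μ ^ 2 = (h * μ) ^ 2 by ring, ← hqr]
    ring
  calc _ = ∑ μ ∈ Ico 1 k, (2 * h * k * (μ * (h * μ / k)) + (h * μ % k) ^ 2) := by
        rw [sum_add_distrib, weightedFloorSum, mul_sum, sum_Ico_mul_mod hc (· ^ 2)]
    _ = _ := by rw [sum_congr rfl fun μ _ => pointwise μ, sum_add_distrib, mul_sum, mul_sum]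

/-- Both sides describe the lattice points `(μ, ν)` with `0 < μ < k`, `0 < ν` and `kν < hμ`. -/
theorem mem_lattice_iff (hc : h.Coprime k) (μ ν : ℕ) :
    μ ∈ Ico 1 k ∧ ν ∈ Ico 1 (h * μ / k + 1) ↔ μ ∈ Ioo (k * ν / h) k ∧ ν ∈ Ico 1 h := by
  simp only [mem_Ico, mem_Ioo]
  constructor
  · rintro ⟨⟨hμ, hμk⟩, hν, hνq⟩
    have hk : 0 < k := by omega
    have hle : ν * k ≤ h * μ := (Nat.le_div_iff_mul_le hk).1 (Nat.lt_succ_iff.1 hνq)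
    have hne : ν * k ≠ h * μ := fun he =>
      not_dvd_mul_of_coprime hc (mem_Ico.2 ⟨hμ, hμk⟩) ⟨ν, by rw [← he, mul_comm]⟩
    have hlt : ν * k < h * μ := lt_of_le_of_ne hle hne
    have hh : 0 < h := by rcases Nat.eq_zero_or_pos h with rfl | hh <;> simp_all
    refine ⟨⟨(Nat.div_lt_iff_lt_mul hh).2 (by linarith), hμk⟩, hν, ?_⟩
    nlinarith
  · rintro ⟨⟨hlt, hμk⟩, hν, hνh⟩
    have hh : 0 < h := by omega
    have hlt' : k * ν < μ * h := (Nat.div_lt_iff_lt_mul hh).1 hlt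
    exact ⟨⟨(Nat.zero_le _).trans_lt hlt, hμk⟩, hν,
      Nat.lt_succ_of_le ((Nat.le_div_iff_mul_le (by omega)).2 (by linarith))⟩

theorem sum_sq_div_add_two_mul_weightedFloorSum (hc : h.Coprime k) :
    ∑ μ ∈ Ico 1 k, (h * μ / k) ^ 2 + 2 * weightedFloorSum k h =
      (k - 1) * (h - 1) ^ 2 + ∑ ν ∈ Ico 1 h, k * ν / h := by
  have count : ∑ μ ∈ Ico 1 k, (h * μ / k) ^ 2 =
      ∑ ν ∈ Ico 1 h, (2 * ν - 1) * (k - 1 - k * ν / h) := by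
    calc _ = ∑ μ ∈ Ico 1 k, ∑ ν ∈ Ico 1 (h * μ / k + 1), (2 * ν - 1) := by simp [sum_Ico_odd]
      _ = ∑ ν ∈ Ico 1 h, ∑ μ ∈ Ioo (k * ν / h) k, (2 * ν - 1) := sum_comm' (mem_lattice_iff hc)
      _ = _ := sum_congr rfl fun ν _ => by
        rw [sum_const, Nat.card_Ioo, smul_eq_mul, mul_comm, Nat.sub_right_comm]
  rw [count, weightedFloorSum, mul_sum, ← sum_Ico_odd h, mul_sum, ← sum_add_distrib,
    ← sum_add_distrib]
  refine sum_congr rfl fun ν hν => ?_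
  rw [mem_Ico] at hν
  have hk : 0 < k := Nat.pos_of_ne_zero fun hk => by simp [hk] at hc; omega
  have hlt : k * ν / h < k :=
    (Nat.div_lt_iff_lt_mul (by omega)).2 (Nat.mul_lt_mul_of_pos_left hν.2 hk)
  zify [(by omega : 1 ≤ 2 * ν), Nat.le_sub_one_of_lt hlt, hk]
  ring

theorem weightedFloorSum_reciprocity (hc : h.Coprime k) (hh : 0 < h) (hk : 0 < k) :
    12 * ((h : ℤ) * weightedFloorSum h k + k * weightedFloorSum k h) =
      (h - 1) * (k - 1) * (8 * h * k - h - k - 1) := by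
  have hA := two_mul_mul_weightedFloorSum_add_sum_sq hc
  have hB := sum_sq_div_add_two_mul_weightedFloorSum hc
  have hP := sum_Ico_div_mul_two hc.symm
  have hS := sum_Ico_sq_mul_six k
  zify [hh, hk, (by omega : 1 ≤ 2 * k)] at hA hB hP hS
  apply mul_left_cancel₀ (show (k : ℤ) ≠ 0 by positivity)
  linear_combination 6 * hA + 6 * (k : ℤ) ^ 2 * hB + 3 * (k : ℤ) ^ 2 * hP + ((h : ℤ) ^ 2 - 1) * hS

theorem sawtooth_natCast_div {n : ℕ} (hk : 0 < k) (hn : ¬ k ∣ n) :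
    sawtooth (n / k) = (n % k : ℕ) / k - 1 / 2 := by
  rw [sawtooth, dif_neg, Int.fract_div_natCast_eq_div_natCast_mod]
  rintro ⟨m, hm⟩
  have : (n : ℤ) = m * k := by
    exact_mod_cast (div_eq_iff (by positivity : (k : ℝ) ≠ 0)).1 hm
  exact hn (Int.natCast_dvd_natCast.1 ⟨m, by rw [this, mul_comm]⟩)

theorem dedekindSum_eq (hc : h.Coprime k) (hh : 0 < h) (hk : 0 < k) :
    dedekindSum h k =
      (h * (k - 1) * (2 * k - 1) - 6 * weightedFloorSum h k) / (6 * k) - (k - 1) / 4 := by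
  have hk' : (k : ℝ) ≠ 0 := by positivity
  have hterm : ∀ μ ∈ Ico 1 k, sawtooth (h * μ / k) * sawtooth (μ / k) =
      h / k ^ 2 * (μ : ℝ) ^ 2 - 1 / k * (μ * (h * μ / k : ℕ)) - (h + 1) / (2 * k) * μ
        + 1 / 2 * (h * μ / k : ℕ) + 1 / 4 := fun μ hμ => by
    have hr : ((h * μ % k : ℕ) : ℝ) = h * μ - k * (h * μ / k : ℕ) := by
      rw [eq_sub_iff_add_eq]; exact_mod_cast Nat.mod_add_div (h * μ) k
    rw [← Nat.cast_mul, sawtooth_natCast_div hk (not_dvd_mul_of_coprime hc hμ),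
      sawtooth_natCast_div hk (Nat.not_dvd_of_pos_of_lt (mem_Ico.1 hμ).1 (mem_Ico.1 hμ).2),
      Nat.mod_eq_of_lt (mem_Ico.1 hμ).2, hr]
    field_simp
    ring
  have hlast : sawtooth (h * k / k) * sawtooth (k / k) = 0 := by
    rw [div_self hk', show sawtooth 1 = 0 from dif_pos ⟨1, by simp⟩, mul_zero]
  have hS := congrArg (Nat.cast : ℕ → ℝ) (sum_Ico_sq_mul_six k)
  have hT := congrArg (Nat.cast : ℕ → ℝ) (sum_Ico_id_mul_two k)
  have hP := congrArg (Nat.cast : ℕ → ℝ) (sum_Ico_div_mul_two hc)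
  push_cast [Nat.cast_pred hh, Nat.cast_pred hk, Nat.cast_pred (by omega : 0 < 2 * k)] at hS hT hP
  rw [dedekindSum, ← Ico_insert_right hk, sum_insert right_notMem_Ico, hlast, zero_add,
    sum_congr rfl hterm]
  simp only [sum_add_distrib, sum_sub_distrib, ← mul_sum, sum_const, Nat.card_Ico, nsmul_eq_mul]
  rw [weightedFloorSum, Nat.cast_pred hk]
  push_cast
  field_simp
  linear_combination 8 * (h : ℝ) * hS - 12 * (k : ℝ) * (h + 1) * hT + 12 * (k : ℝ) ^ 2 * hP

end DedekindSum

/-- The Dedekind sum reciprocity formula: for coprime positive integers `r, b`,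
`s(r/b) + s(b/r) = -1/4 + (1/12)(r/b + b/r + 1/(rb))`. -/
theorem dedekindSum_reciprocity (r b : ℕ) (hr : 0 < r) (hb : 0 < b)
    (hrb : Nat.Coprime r b) :
    dedekindSum r b + dedekindSum b r =
      -(1 / 4 : ℝ) + (1 / 12) * ((r : ℝ) / b + (b : ℝ) / r + 1 / (r * b)) := by
  have key : 12 * ((r : ℝ) * DedekindSum.weightedFloorSum r b +
      b * DedekindSum.weightedFloorSum b r) = (r - 1) * (b - 1) * (8 * r * b - r - b - 1) := by
    exact_mod_cast DedekindSum.weightedFloorSum_reciprocity hrb hr hb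
  rw [DedekindSum.dedekindSum_eq hrb hr hb, DedekindSum.dedekindSum_eq hrb.symm hb hr]
  field_simp
  linear_combination -24 * key
end

section
/- Littlewood's Tauberian theorem: if c_n are complex numbers with c_n = O(1/n) and lim_{r→1⁻} ∑_{n=0}^∞ c_n r^n = a, then ∑_{n=0}^∞ c_n converges to a. -/
/-!
Write `s N = ∑ n < N, c n` and `f r = ∑ c n r ^ n`. Comparing term by term, `‖c n‖ ≤ C / n` gives
`‖s N - f (1 - 1 / N)‖ ≤ 2 C`, so the partial sums are bounded. Since
`(1 - x) ∑ s n x ^ n = x f x → a`, the Hardy–Littlewood theorem for bounded real sequences, applied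
to the real and imaginary parts of `s`, shows that `s` is Cesàro summable to `a`. That theorem is
proved following Karamata: Abel means weighted by `p (x ^ n)` for a polynomial `p` tend to
`a ∫₀¹ p`, and the Cesàro mean is squeezed between two such means whose polynomials approximate
`t⁻¹ 𝟙[e⁻¹, 1]` from below and from above. Finally, Hardy's Tauberian theorem upgrades Cesàro
summability to convergence: the average of `s` over `[N, N + δ N)` tends to `a`, and by the
`O(1 / n)` bound it differs from `s N` by at most about `C δ`.
-/

open Filter Finset Topology Polynomial

section Hardy

variable {E : Type*} [NormedAddCommGroup E] {c : ℕ → E} {C : ℝ}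

lemma nonneg_of_norm_le_div (hc : ∀ n, 1 ≤ n → ‖c n‖ ≤ C / n) : 0 ≤ C := by
  simpa using (norm_nonneg _).trans (hc 1 le_rfl)

lemma norm_le_max_of_norm_le_div (hc : ∀ n, 1 ≤ n → ‖c n‖ ≤ C / n) (n : ℕ) :
    ‖c n‖ ≤ max ‖c 0‖ C := by
  rcases n.eq_zero_or_pos with rfl | hn
  · exact le_max_left _ _
  · exact (hc n hn).trans <| (div_le_self (nonneg_of_norm_le_div hc) (by exact_mod_cast hn)).trans
      (le_max_right _ _)

lemma norm_sum_Ico_le_of_norm_le_div (hc : ∀ n, 1 ≤ n → ‖c n‖ ≤ C / n)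
    {N k : ℕ} (hN : 1 ≤ N) : ‖∑ j ∈ Ico N k, c j‖ ≤ (k - N : ℕ) * (C / N) := by
  calc ‖∑ j ∈ Ico N k, c j‖ ≤ ∑ j ∈ Ico N k, ‖c j‖ := norm_sum_le _ _
    _ ≤ ∑ _j ∈ Ico N k, C / N := sum_le_sum fun j hj => by
        have hjN := (mem_Ico.1 hj).1
        exact (hc j (hN.trans hjN)).trans <| div_le_div_of_nonneg_left
          (nonneg_of_norm_le_div hc) (by positivity) (by exact_mod_cast hjN)
    _ = (k - N : ℕ) * (C / N) := by simp

variable [NormedSpace ℝ E]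

lemma norm_sum_range_sub_average_Ico_le
    (hc : ∀ n, 1 ≤ n → ‖c n‖ ≤ C / n) {N K : ℕ} (hN : 1 ≤ N) (hK : 0 < K) :
    ‖∑ n ∈ range N, c n - (K : ℝ)⁻¹ • ∑ k ∈ Ico N (N + K), ∑ n ∈ range k, c n‖
      ≤ K * (C / N) := by
  have hK' : (K : ℝ) ≠ 0 := by positivity
  have hconst : ∑ n ∈ range N, c n = (K : ℝ)⁻¹ • ∑ _k ∈ Ico N (N + K), ∑ n ∈ range N, c n := by
    rw [sum_const, Nat.card_Ico, Nat.add_sub_cancel_left, ← Nat.cast_smul_eq_nsmul ℝ,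
      inv_smul_smul₀ hK']
  have hterm : ∀ k ∈ Ico N (N + K), ‖∑ n ∈ range N, c n - ∑ n ∈ range k, c n‖ ≤ K * (C / N) := by
    intro k hk
    obtain ⟨hNk, hkK⟩ := mem_Ico.1 hk
    rw [norm_sub_rev, ← sum_Ico_eq_sub _ hNk]
    refine (norm_sum_Ico_le_of_norm_le_div hc hN).trans ?_
    gcongr
    · exact div_nonneg (nonneg_of_norm_le_div hc) (Nat.cast_nonneg N)
    · omega
  rw [hconst, ← smul_sub, ← sum_sub_distrib, norm_smul, norm_inv, Real.norm_natCast]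
  calc (K : ℝ)⁻¹ * ‖∑ k ∈ Ico N (N + K), (∑ n ∈ range N, c n - ∑ n ∈ range k, c n)‖
      ≤ (K : ℝ)⁻¹ * ∑ _k ∈ Ico N (N + K), K * (C / N) := by
        gcongr
        exact (norm_sum_le _ _).trans (sum_le_sum hterm)
    _ = K * (C / N) := by simp [hK']

lemma tendsto_average_Ico_of_tendsto_cesaro {s : ℕ → E} {a : E}
    (hs : Tendsto (fun N : ℕ => (N : ℝ)⁻¹ • ∑ k ∈ range N, s k) atTop (𝓝 a))
    {K : ℕ → ℕ} (hK : ∀ N, 0 < K N) {D : ℝ} (hKD : ∀ N : ℕ, (N : ℝ) ≤ D * K N) :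
    Tendsto (fun N => (K N : ℝ)⁻¹ • ∑ k ∈ Ico N (N + K N), s k) atTop (𝓝 a) := by
  set σ : ℕ → E := fun N => (N : ℝ)⁻¹ • ∑ k ∈ range N, s k
  have hsum : ∀ M, ∑ k ∈ range M, s k = (M : ℝ) • σ M := by
    intro M
    rcases M.eq_zero_or_pos with rfl | hM
    · simp
    · exact (smul_inv_smul₀ (by positivity) _).symm
  have hsplit : ∀ N, (K N : ℝ)⁻¹ • ∑ k ∈ Ico N (N + K N), s k
      = σ (N + K N) + ((N : ℝ) / K N) • (σ (N + K N) - σ N) := by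
    intro N
    have hKN : (K N : ℝ) ≠ 0 := (Nat.cast_pos.2 (hK N)).ne'
    rw [sum_Ico_eq_sub _ (Nat.le_add_right _ _), hsum (N + K N), hsum N]
    push_cast
    match_scalars <;> field_simp
    ring
  have hfar : Tendsto (fun N => σ (N + K N)) atTop (𝓝 a) :=
    hs.comp (tendsto_atTop_mono (fun N => Nat.le_add_right N (K N)) tendsto_id)
  have hdiff : Tendsto (fun N : ℕ => ((N : ℝ) / K N) • (σ (N + K N) - σ N)) atTop (𝓝 0) := by
    refine squeeze_zero_norm (a := fun N : ℕ => D * ‖σ (N + K N) - σ N‖) (fun N => ?_) ?_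
    · rw [norm_smul, Real.norm_of_nonneg (by positivity)]
      gcongr
      exact (div_le_iff₀ (Nat.cast_pos.2 (hK N))).2 (hKD N)
    · simpa using ((hfar.sub hs).norm.const_mul D)
  simpa only [hsplit, add_zero] using hfar.add hdiff

lemma eventually_norm_sum_range_sub_lt {a : E}
    (hc : ∀ n, 1 ≤ n → ‖c n‖ ≤ C / n)
    (hσ : Tendsto (fun N : ℕ => (N : ℝ)⁻¹ • ∑ k ∈ range N, ∑ n ∈ range k, c n) atTop (𝓝 a))
    {δ η : ℝ} (hδ : 0 < δ) (hη : 0 < η) :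
    ∀ᶠ N in atTop, ‖∑ n ∈ range N, c n - a‖ < C * δ + η := by
  set K : ℕ → ℕ := fun N => ⌊δ * N⌋₊ + 1
  have hKD : ∀ N : ℕ, (N : ℝ) ≤ δ⁻¹ * K N := fun N => by
    rw [← div_eq_inv_mul, le_div_iff₀' hδ]
    exact (Nat.lt_floor_add_one _).le.trans (by push_cast [K]; rfl)
  have hwin := tendsto_iff_norm_sub_tendsto_zero.1
    (tendsto_average_Ico_of_tendsto_cesaro hσ (fun N => Nat.succ_pos _) hKD)
  filter_upwards [hwin.eventually (gt_mem_nhds (half_pos hη)),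
    (tendsto_const_div_atTop_nhds_zero_nat C).eventually (gt_mem_nhds (half_pos hη)),
    eventually_ge_atTop 1] with N hW hCN hN
  have hKN : (K N : ℝ) ≤ δ * N + 1 := by
    push_cast [K]
    gcongr
    exact Nat.floor_le (by positivity)
  have hC := nonneg_of_norm_le_div hc
  have hN' : (N : ℝ) ≠ 0 := by positivity
  set W := (K N : ℝ)⁻¹ • ∑ k ∈ Ico N (N + K N), ∑ n ∈ range k, c n
  calc ‖∑ n ∈ range N, c n - a‖ ≤ ‖∑ n ∈ range N, c n - W‖ + ‖W - a‖ :=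
        norm_sub_le_norm_sub_add_norm_sub _ _ _
    _ ≤ (δ * N + 1) * (C / N) + ‖W - a‖ := by
        gcongr
        exact (norm_sum_range_sub_average_Ico_le hc hN (Nat.succ_pos _)).trans (by gcongr)
    _ < C * δ + η := by
        rw [add_mul, mul_assoc, mul_div_cancel₀ _ hN', one_mul, mul_comm δ]
        linarith

theorem tendsto_sum_range_of_tendsto_cesaro {a : E}
    (hc : ∀ n, 1 ≤ n → ‖c n‖ ≤ C / n)
    (hσ : Tendsto (fun N : ℕ => (N : ℝ)⁻¹ • ∑ k ∈ range N, ∑ n ∈ range k, c n) atTop (𝓝 a)) :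
    Tendsto (fun N => ∑ n ∈ range N, c n) atTop (𝓝 a) := by
  have hC := nonneg_of_norm_le_div hc
  refine Metric.tendsto_nhds.2 fun ε hε => ?_
  have hCδ : C * (ε / (2 * (C + 1))) ≤ ε / 2 := by
    rw [← mul_div_assoc, div_le_iff₀ (by positivity)]
    nlinarith
  filter_upwards [eventually_norm_sum_range_sub_lt hc hσ (δ := ε / (2 * (C + 1)))
    (by positivity) (half_pos hε)] with N hN
  rw [dist_eq_norm]
  linarith

end Hardy

section PowerSeries

variable {𝕜 : Type*} [NormedField 𝕜]

lemma summable_mul_pow_of_norm_le [CompleteSpace 𝕜] {u : ℕ → 𝕜} {B : ℝ} (hu : ∀ n, ‖u n‖ ≤ B)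
    {z : 𝕜} (hz : ‖z‖ < 1) : Summable fun n => u n * z ^ n :=
  .of_norm_bounded ((summable_geometric_of_lt_one (norm_nonneg z) hz).mul_left B) fun n => by
    rw [norm_mul, norm_pow]
    exact mul_le_mul_of_nonneg_right (hu n) (by positivity)

lemma one_sub_mul_tsum_sum_range_mul_pow {c : ℕ → 𝕜} {z : 𝕜}
    (hs : Summable fun n => (∑ k ∈ range n, c k) * z ^ n) :
    (1 - z) * ∑' n, (∑ k ∈ range n, c k) * z ^ n = z * ∑' n, c n * z ^ n := by
  have hshift : ∑' n, (∑ k ∈ range n, c k) * z ^ n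
      = ∑' n, (∑ k ∈ range (n + 1), c k) * z ^ (n + 1) := by
    rw [hs.tsum_eq_zero_add, sum_range_zero, zero_mul, zero_add]
  have hmul : z * ∑' n, (∑ k ∈ range n, c k) * z ^ n
      = ∑' n, (∑ k ∈ range n, c k) * z ^ (n + 1) := by
    rw [← tsum_mul_left]
    exact tsum_congr fun n => by ring
  have hs₁ : Summable fun n => (∑ k ∈ range (n + 1), c k) * z ^ (n + 1) :=
    (summable_nat_add_iff (f := fun n => (∑ k ∈ range n, c k) * z ^ n) 1).2 hs
  have hs₂ : Summable fun n => (∑ k ∈ range n, c k) * z ^ (n + 1) := by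
    simpa only [pow_succ, mul_assoc] using hs.mul_right z
  rw [sub_mul, one_mul, hmul]
  nth_rw 1 [hshift]
  rw [← hs₁.tsum_sub hs₂, ← tsum_mul_left]
  exact tsum_congr fun n => by rw [sum_range_succ]; ring

end PowerSeries

lemma norm_sum_range_sub_tsum_mul_pow_le {c : ℕ → ℂ} {C : ℝ} (hc : ∀ n, 1 ≤ n → ‖c n‖ ≤ C / n)
    {r : ℝ} (hr0 : 0 ≤ r) (hr1 : r < 1) {N : ℕ} (hN : 0 < N) :
    ‖∑ n ∈ range N, c n - ∑' n, c n * (r : ℂ) ^ n‖ ≤ C * (N * (1 - r)) + C / (N * (1 - r)) := by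
  have hC := nonneg_of_norm_le_div hc
  have hN' : (0 : ℝ) < N := by exact_mod_cast hN
  have hsum : Summable fun n => c n * (r : ℂ) ^ n :=
    summable_mul_pow_of_norm_le (norm_le_max_of_norm_le_div hc) (by simpa [abs_of_nonneg hr0])
  have hhead : ‖∑ n ∈ range N, (c n - c n * (r : ℂ) ^ n)‖ ≤ C * (N * (1 - r)) := by
    refine (norm_sum_le _ _).trans ?_
    calc ∑ n ∈ range N, ‖c n - c n * (r : ℂ) ^ n‖ ≤ ∑ _n ∈ range N, C * (1 - r) :=
          sum_le_sum fun n _ => ?_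
      _ = C * (N * (1 - r)) := by simp; ring
    have hrn : 0 ≤ 1 - r ^ n := sub_nonneg.2 (pow_le_one₀ hr0 hr1.le)
    rw [← mul_one_sub, norm_mul, ← Complex.ofReal_pow, ← Complex.ofReal_one, ← Complex.ofReal_sub,
      Complex.norm_real, Real.norm_of_nonneg hrn]
    rcases n.eq_zero_or_pos with rfl | hn
    · simp only [pow_zero, sub_self, mul_zero]
      exact mul_nonneg hC (by linarith)
    · have hbernoulli : 1 - r ^ n ≤ n * (1 - r) := by
        have := one_add_mul_le_pow (a := r - 1) (by linarith) n
        rw [add_sub_cancel] at this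
        linarith
      calc ‖c n‖ * (1 - r ^ n) ≤ C / n * (n * (1 - r)) :=
            mul_le_mul (hc n hn) hbernoulli hrn (by positivity)
        _ = C * (1 - r) := by field_simp
  have htail : ‖∑' n, c (n + N) * (r : ℂ) ^ (n + N)‖ ≤ C / (N * (1 - r)) := by
    have hgeom := (hasSum_geometric_of_lt_one hr0 hr1).mul_left (C / N)
    rw [← div_div, div_eq_mul_inv (C / N)]
    refine tsum_of_norm_bounded hgeom fun n => ?_
    rw [norm_mul, norm_pow, Complex.norm_real, Real.norm_of_nonneg hr0]
    refine mul_le_mul ((hc _ (by omega)).trans ?_) (pow_le_pow_of_le_one hr0 hr1.le (by omega))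
      (by positivity) (by positivity)
    exact div_le_div_of_nonneg_left hC hN' (by exact_mod_cast Nat.le_add_left N n)
  rw [← hsum.sum_add_tsum_nat_add N, ← sub_sub, ← sum_sub_distrib]
  exact (norm_sub_le _ _).trans (add_le_add hhead htail)

lemma tendsto_one_sub_inv_natCast_nhdsLT :
    Tendsto (fun N : ℕ => 1 - (N : ℝ)⁻¹) atTop (𝓝[<] 1) := by
  refine tendsto_nhdsWithin_iff.2 ⟨?_, ?_⟩
  · simpa using (tendsto_inv_atTop_nhds_zero_nat (𝕜 := ℝ)).const_sub 1
  · filter_upwards [eventually_gt_atTop 0] with N hN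
    simpa using hN

lemma exists_norm_sum_range_le {c : ℕ → ℂ} {C : ℝ} {a : ℂ} (hc : ∀ n, 1 ≤ n → ‖c n‖ ≤ C / n)
    (ha : Tendsto (fun r : ℝ => ∑' n, c n * (r : ℂ) ^ n) (𝓝[<] 1) (𝓝 a)) :
    ∃ M, ∀ N, ‖∑ n ∈ range N, c n‖ ≤ M := by
  have hnear : ∀ᶠ N : ℕ in atTop, ‖∑' n, c n * ((1 - (N : ℝ)⁻¹ : ℝ) : ℂ) ^ n‖ ≤ ‖a‖ + 1 :=
    (ha.norm.comp tendsto_one_sub_inv_natCast_nhdsLT).eventually (ge_mem_nhds (lt_add_one _))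
  have hev : ∀ᶠ N : ℕ in atTop, ‖∑ n ∈ range N, c n‖ ≤ 2 * C + (‖a‖ + 1) := by
    filter_upwards [hnear, eventually_gt_atTop 0] with N hfN hN
    have hN' : (1 : ℝ) ≤ N := by exact_mod_cast hN
    have hest := norm_sum_range_sub_tsum_mul_pow_le hc (r := 1 - (N : ℝ)⁻¹)
      (sub_nonneg.2 (inv_le_one_of_one_le₀ hN')) (by simpa using hN) hN
    rw [sub_sub_cancel, mul_inv_cancel₀ (by positivity), mul_one, div_one] at hest
    linarith [norm_sub_norm_le (∑ n ∈ range N, c n) (∑' n, c n * ((1 - (N : ℝ)⁻¹ : ℝ) : ℂ) ^ n)]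
  obtain ⟨M, hM⟩ := (isBoundedUnder_of_eventually_le hev).bddAbove_range
  exact ⟨M, fun N => hM ⟨N, rfl⟩⟩

section Karamata

open Real

noncomputable def ramp (u δ t : ℝ) : ℝ := max 0 (min 1 ((t - u) / δ))

lemma continuous_ramp (u δ : ℝ) : Continuous (ramp u δ) :=
  continuous_const.max (continuous_const.min ((continuous_id.sub continuous_const).div_const δ))

lemma ramp_nonneg (u δ t : ℝ) : 0 ≤ ramp u δ t := le_max_left _ _

lemma ramp_le_one (u δ t : ℝ) : ramp u δ t ≤ 1 := max_le zero_le_one (min_le_left _ _)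

lemma ramp_of_le {u δ t : ℝ} (hδ : 0 ≤ δ) (ht : t ≤ u) : ramp u δ t = 0 :=
  max_eq_left <| (min_le_right _ _).trans (div_nonpos_of_nonpos_of_nonneg (by linarith) hδ)

lemma ramp_of_ge {u δ t : ℝ} (hδ : 0 < δ) (ht : u + δ ≤ t) : ramp u δ t = 1 := by
  rw [ramp, min_eq_left ((le_div_iff₀ hδ).2 (by linarith)), max_eq_right zero_le_one]

lemma exists_polynomial_ge_of_continuousOn {a b : ℝ} (hab : a ≤ b) {f : ℝ → ℝ}
    (hf : ContinuousOn f (Set.Icc a b)) {ε : ℝ} (hε : 0 < ε) :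
    ∃ q : ℝ[X], (∀ t ∈ Set.Icc a b, f t ≤ q.eval t) ∧
      ∫ t in a..b, q.eval t ≤ (∫ t in a..b, f t) + (b - a) * ε := by
  obtain ⟨q, hq⟩ := exists_polynomial_near_of_continuousOn a b (fun t => f t + ε / 2)
    (hf.add continuousOn_const) (ε / 2) (half_pos hε)
  have hbounds : ∀ t ∈ Set.Icc a b, f t ≤ q.eval t ∧ q.eval t ≤ f t + ε := fun t ht => by
    have := abs_lt.1 (hq t ht)
    constructor <;> linarith [this.1, this.2]
  have hfi := hf.intervalIntegrable_of_Icc (μ := MeasureTheory.volume) hab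
  refine ⟨q, fun t ht => (hbounds t ht).1, ?_⟩
  calc ∫ t in a..b, q.eval t ≤ ∫ t in a..b, (f t + ε) :=
        intervalIntegral.integral_mono_on hab (q.continuous.intervalIntegrable _ _)
          (hfi.add intervalIntegrable_const) fun t ht => (hbounds t ht).2
    _ = (∫ t in a..b, f t) + (b - a) * ε := by
        rw [intervalIntegral.integral_add hfi intervalIntegrable_const,
          intervalIntegral.integral_const, smul_eq_mul]

lemma exists_polynomial_le_of_continuousOn {a b : ℝ} (hab : a ≤ b) {f : ℝ → ℝ}
    (hf : ContinuousOn f (Set.Icc a b)) {ε : ℝ} (hε : 0 < ε) :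
    ∃ p : ℝ[X], (∀ t ∈ Set.Icc a b, p.eval t ≤ f t) ∧
      (∫ t in a..b, f t) - (b - a) * ε ≤ ∫ t in a..b, p.eval t := by
  obtain ⟨q, hfq, hq⟩ := exists_polynomial_ge_of_continuousOn hab hf.neg hε
  refine ⟨-q, fun t ht => by simpa [neg_le] using hfq t ht, ?_⟩
  simp only [eval_neg, Pi.neg_apply, intervalIntegral.integral_neg] at hq ⊢
  linarith

/-- For `x = 1 - (N + 1)⁻¹`, the weight `x ^ n * karamataKernel (x ^ n)` is `1` if `n ≤ N` and `0`
otherwise, and `∫₀¹ karamataKernel = 1`. -/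
noncomputable def karamataKernel (t : ℝ) : ℝ := if exp (-1) ≤ t then t⁻¹ else 0

lemma exp_neg_one_le_one_sub_inv_pow_iff (N n : ℕ) :
    exp (-1) ≤ (1 - ((N : ℝ) + 1)⁻¹) ^ n ↔ n ≤ N := by
  set x := 1 - ((N : ℝ) + 1)⁻¹
  have hx0 : 0 ≤ x := sub_nonneg.2 (inv_le_one_of_one_le₀ (by simp))
  have hx1 : x ≤ 1 := sub_le_self _ (by positivity)
  constructor
  · intro h
    by_contra! hn
    have hlt : x ^ (N + 1) < exp (-1) :=
      calc x ^ (N + 1) < exp (-((N : ℝ) + 1)⁻¹) ^ (N + 1) :=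
            pow_lt_pow_left₀ (one_sub_lt_exp_neg (by positivity)) hx0 N.succ_ne_zero
        _ = exp (-1) := by rw [← exp_nat_mul]; push_cast; field_simp
    exact (h.trans (pow_le_pow_of_le_one hx0 hx1 hn)).not_gt hlt
  · intro hn
    have hprod : x ^ N * (1 + (N : ℝ)⁻¹) ^ N = 1 := by
      rw [← mul_pow]
      rcases N.eq_zero_or_pos with rfl | hN
      · simp
      · rw [show x * (1 + (N : ℝ)⁻¹) = 1 by simp only [x]; field_simp; ring, one_pow]
    calc exp (-1) = (exp 1)⁻¹ := exp_neg 1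
      _ ≤ ((1 + (N : ℝ)⁻¹) ^ N)⁻¹ := inv_anti₀ (by positivity) one_add_inv_pow_le_exp
      _ = x ^ N := (eq_inv_of_mul_eq_one_left hprod).symm
      _ ≤ x ^ n := pow_le_pow_of_le_one hx0 hx1 hn

lemma hasSum_mul_pow_mul_karamataKernel (b : ℕ → ℝ) (N : ℕ) :
    HasSum (fun n => b n * (1 - ((N : ℝ) + 1)⁻¹) ^ n * karamataKernel ((1 - ((N : ℝ) + 1)⁻¹) ^ n))
      (∑ n ∈ range (N + 1), b n) := by
  have hweight : ∀ n, (1 - ((N : ℝ) + 1)⁻¹) ^ n * karamataKernel ((1 - ((N : ℝ) + 1)⁻¹) ^ n)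
      = if n ≤ N then 1 else 0 := by
    intro n
    have hiff := exp_neg_one_le_one_sub_inv_pow_iff N n
    unfold karamataKernel
    split_ifs with h₁ h₂ h₂
    · exact mul_inv_cancel₀ ((exp_pos _).trans_le h₁).ne'
    · exact absurd (hiff.1 h₁) h₂
    · exact absurd (hiff.2 h₂) h₁
    · exact mul_zero _
  simp_rw [mul_assoc, hweight]
  have hfin : HasSum (fun n => b n * if n ≤ N then (1 : ℝ) else 0)
      (∑ n ∈ range (N + 1), b n * if n ≤ N then (1 : ℝ) else 0) :=
    hasSum_sum_of_ne_finset_zero fun n hn => by rw [if_neg (by simpa using hn), mul_zero]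
  rwa [sum_congr rfl fun n hn => by rw [if_pos (Nat.lt_succ_iff.1 (mem_range.1 hn)), mul_one]]
    at hfin

noncomputable def karamataEnvelope (t : ℝ) : ℝ := (max t (exp (-1)))⁻¹

lemma continuous_karamataEnvelope : Continuous karamataEnvelope :=
  (continuous_id.max continuous_const).inv₀ fun _ => ((exp_pos _).trans_le (le_max_right _ _)).ne'

lemma karamataEnvelope_nonneg (t : ℝ) : 0 ≤ karamataEnvelope t :=
  inv_nonneg.2 ((exp_pos _).le.trans (le_max_right _ _))

lemma karamataEnvelope_le (t : ℝ) : karamataEnvelope t ≤ exp 1 := by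
  rw [karamataEnvelope, ← inv_inv (exp 1), ← exp_neg]
  exact inv_anti₀ (exp_pos _) (le_max_right _ _)

lemma karamataEnvelope_of_le {t : ℝ} (ht : exp (-1) ≤ t) : karamataEnvelope t = t⁻¹ := by
  rw [karamataEnvelope, max_eq_left ht]

lemma integral_karamataEnvelope : ∫ t in exp (-1)..1, karamataEnvelope t = 1 := by
  have hc1 : exp (-1) ≤ 1 := exp_le_one_iff.2 (by norm_num)
  rw [intervalIntegral.integral_congr (g := fun t => t⁻¹) fun t ht =>
    karamataEnvelope_of_le (Set.uIcc_of_le hc1 ▸ ht).1, integral_inv]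
  · simp [exp_neg]
  · rw [Set.uIcc_of_le hc1]
    exact fun h => (exp_pos _).not_ge h.1

lemma integral_karamataEnvelope_le (u : ℝ) {δ : ℝ} (hδ : 0 ≤ δ) :
    ∫ t in u..u + δ, karamataEnvelope t ≤ exp 1 * δ := by
  calc ∫ t in u..u + δ, karamataEnvelope t ≤ ∫ _t in u..u + δ, exp 1 :=
        intervalIntegral.integral_mono_on (by linarith)
          (continuous_karamataEnvelope.intervalIntegrable _ _) intervalIntegrable_const
          fun t _ => karamataEnvelope_le t
    _ = exp 1 * δ := by simp [mul_comm]

lemma exists_continuous_ge_karamataKernel {δ : ℝ} (hδ : 0 < δ) (hδc : δ ≤ exp (-1)) :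
    ∃ h : ℝ → ℝ, Continuous h ∧ (∀ t ∈ Set.Icc (0 : ℝ) 1, karamataKernel t ≤ h t) ∧
      ∫ t in (0 : ℝ)..1, h t ≤ 1 + exp 1 * δ := by
  set c := exp (-1)
  have hc1 : c ≤ 1 := exp_le_one_iff.2 (by norm_num)
  set h := fun t => karamataEnvelope t * ramp (c - δ) δ t
  have hcont : Continuous h := continuous_karamataEnvelope.mul (continuous_ramp _ _)
  have hle : ∀ t, h t ≤ karamataEnvelope t := fun t =>
    mul_le_of_le_one_right (karamataEnvelope_nonneg t) (ramp_le_one _ _ _)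
  have heq : ∀ t, c ≤ t → h t = karamataEnvelope t := fun t ht => by
    simp only [h, ramp_of_ge hδ (by linarith : c - δ + δ ≤ t), mul_one]
  refine ⟨h, hcont, fun t _ => ?_, ?_⟩
  · unfold karamataKernel
    split_ifs with htc
    · rw [heq t htc, karamataEnvelope_of_le htc]
    · exact mul_nonneg (karamataEnvelope_nonneg t) (ramp_nonneg _ _ _)
  have hint : ∀ a b, IntervalIntegrable h MeasureTheory.volume a b := hcont.intervalIntegrable
  have hleft : ∫ t in (0 : ℝ)..c - δ, h t = 0 := by
    rw [intervalIntegral.integral_congr (g := fun _ => (0 : ℝ)) fun t ht => ?_,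
      intervalIntegral.integral_zero]
    rw [Set.uIcc_of_le (by linarith)] at ht
    simp only [h, ramp_of_le hδ.le ht.2, mul_zero]
  have hmid : ∫ t in c - δ..c, h t ≤ exp 1 * δ :=
    (intervalIntegral.integral_mono_on (by linarith) (hint _ _)
      (continuous_karamataEnvelope.intervalIntegrable _ _) fun t _ => hle t).trans
      (by simpa using integral_karamataEnvelope_le (c - δ) hδ.le)
  have hright : ∫ t in c..1, h t = 1 := by
    rw [intervalIntegral.integral_congr (g := karamataEnvelope) fun t ht =>
      heq t (Set.uIcc_of_le hc1 ▸ ht).1, integral_karamataEnvelope]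
  rw [← intervalIntegral.integral_add_adjacent_intervals (hint 0 (c - δ)) (hint _ 1),
    ← intervalIntegral.integral_add_adjacent_intervals (hint (c - δ) c) (hint c 1)]
  linarith

lemma exists_continuous_le_karamataKernel {δ : ℝ} (hδ : 0 < δ) (hδc : δ ≤ exp (-1)) :
    ∃ g : ℝ → ℝ, Continuous g ∧ (∀ t ∈ Set.Icc (0 : ℝ) 1, g t ≤ karamataKernel t) ∧
      1 - exp 1 * δ ≤ ∫ t in (0 : ℝ)..1, g t := by
  have hc : exp (-1) ≤ 2⁻¹ := by
    rw [exp_neg]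
    exact inv_anti₀ two_pos (by linarith [add_one_le_exp 1])
  set g := fun t => karamataEnvelope t * ramp (exp (-1)) δ t
  have hcont : Continuous g := continuous_karamataEnvelope.mul (continuous_ramp _ _)
  have hnonneg : ∀ t, 0 ≤ g t := fun t =>
    mul_nonneg (karamataEnvelope_nonneg t) (ramp_nonneg _ _ _)
  refine ⟨g, hcont, fun t _ => ?_, ?_⟩
  · unfold karamataKernel
    split_ifs with htc
    · rw [← karamataEnvelope_of_le htc]
      exact mul_le_of_le_one_right (karamataEnvelope_nonneg t) (ramp_le_one _ _ _)
    · simp only [g, ramp_of_le hδ.le (not_le.1 htc).le, mul_zero, le_refl]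
  have hint : ∀ a b, IntervalIntegrable g MeasureTheory.volume a b := hcont.intervalIntegrable
  have henv : ∀ a b, IntervalIntegrable karamataEnvelope MeasureTheory.volume a b :=
    continuous_karamataEnvelope.intervalIntegrable
  have hleft : 0 ≤ ∫ t in (0 : ℝ)..exp (-1) + δ, g t :=
    intervalIntegral.integral_nonneg (by positivity) fun t _ => hnonneg t
  have hright : ∫ t in exp (-1) + δ..1, g t
      = 1 - ∫ t in exp (-1)..exp (-1) + δ, karamataEnvelope t :=
    calc ∫ t in exp (-1) + δ..1, g t = ∫ t in exp (-1) + δ..1, karamataEnvelope t := by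
          refine intervalIntegral.integral_congr fun t ht => ?_
          rw [Set.uIcc_of_le (by linarith)] at ht
          simp only [g, ramp_of_ge hδ ht.1, mul_one]
      _ = 1 - ∫ t in exp (-1)..exp (-1) + δ, karamataEnvelope t := by
          rw [← intervalIntegral.integral_interval_sub_left (henv _ _) (henv _ _),
            integral_karamataEnvelope]
  rw [← intervalIntegral.integral_add_adjacent_intervals (hint 0 (exp (-1) + δ)) (hint _ 1)]
  linarith [integral_karamataEnvelope_le (exp (-1)) hδ.le]

lemma exists_polynomial_ge_karamataKernel {ε : ℝ} (hε : 0 < ε) :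
    ∃ q : ℝ[X], (∀ t ∈ Set.Icc (0 : ℝ) 1, karamataKernel t ≤ q.eval t) ∧
      ∫ t in (0 : ℝ)..1, q.eval t ≤ 1 + ε := by
  set δ := min (exp (-1)) (ε / (2 * exp 1))
  have hδ : exp 1 * δ ≤ ε / 2 :=
    calc exp 1 * δ ≤ exp 1 * (ε / (2 * exp 1)) := by gcongr; exact min_le_right _ _
      _ = ε / 2 := by field_simp
  obtain ⟨h, hcont, hKh, hint⟩ := exists_continuous_ge_karamataKernel (δ := δ)
    (lt_min (exp_pos _) (by positivity)) (min_le_left _ _)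
  obtain ⟨q, hhq, hq⟩ := exists_polynomial_ge_of_continuousOn zero_le_one hcont.continuousOn
    (half_pos hε)
  rw [sub_zero, one_mul] at hq
  exact ⟨q, fun t ht => (hKh t ht).trans (hhq t ht), by linarith⟩

lemma exists_polynomial_le_karamataKernel {ε : ℝ} (hε : 0 < ε) :
    ∃ p : ℝ[X], (∀ t ∈ Set.Icc (0 : ℝ) 1, p.eval t ≤ karamataKernel t) ∧
      1 - ε ≤ ∫ t in (0 : ℝ)..1, p.eval t := by
  set δ := min (exp (-1)) (ε / (2 * exp 1))
  have hδ : exp 1 * δ ≤ ε / 2 :=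
    calc exp 1 * δ ≤ exp 1 * (ε / (2 * exp 1)) := by gcongr; exact min_le_right _ _
      _ = ε / 2 := by field_simp
  obtain ⟨g, hcont, hgK, hint⟩ := exists_continuous_le_karamataKernel (δ := δ)
    (lt_min (exp_pos _) (by positivity)) (min_le_left _ _)
  obtain ⟨p, hpg, hp⟩ := exists_polynomial_le_of_continuousOn zero_le_one hcont.continuousOn
    (half_pos hε)
  rw [sub_zero, one_mul] at hp
  exact ⟨p, fun t ht => (hpg t ht).trans (hgK t ht), by linarith⟩

lemma tendsto_pow_nhdsLT_one {k : ℕ} (hk : k ≠ 0) :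
    Tendsto (fun x : ℝ => x ^ k) (𝓝[<] 1) (𝓝[<] 1) := by
  refine tendsto_nhdsWithin_iff.2 ⟨?_, ?_⟩
  · simpa using ((continuous_pow k).tendsto (1 : ℝ)).mono_left nhdsWithin_le_nhds
  · filter_upwards [Ioo_mem_nhdsLT zero_lt_one] with x hx
    exact pow_lt_one₀ hx.1.le hx.2 hk

variable {b : ℕ → ℝ} {B L : ℝ}

lemma tendsto_one_sub_mul_tsum_mul_pow_pow
    (hA : Tendsto (fun x => (1 - x) * ∑' n, b n * x ^ n) (𝓝[<] 1) (𝓝 L)) (k : ℕ) :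
    Tendsto (fun x => (1 - x) * ∑' n, b n * x ^ n * (x ^ n) ^ k) (𝓝[<] 1) (𝓝 (L / (k + 1))) := by
  -- substitute `x ^ (k + 1)` for `x` in `hA`, using `1 - x ^ (k + 1) = (1 - x) ∑_{i ≤ k} x ^ i`
  have hgeom : Tendsto (fun x : ℝ => ∑ i ∈ range (k + 1), x ^ i) (𝓝[<] 1) (𝓝 (k + 1)) := by
    simpa using ((continuous_finsetSum (range (k + 1)) fun i _ => continuous_pow i).tendsto
      (1 : ℝ)).mono_left nhdsWithin_le_nhds
  have hsub := hA.comp (tendsto_pow_nhdsLT_one k.succ_ne_zero)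
  rw [div_eq_inv_mul]
  refine ((hgeom.inv₀ (by positivity)).mul hsub).congr' ?_
  filter_upwards [Ioo_mem_nhdsLT zero_lt_one] with x hx
  have hpos : 0 < ∑ i ∈ range (k + 1), x ^ i :=
    sum_pos (fun i _ => pow_pos hx.1 i) nonempty_range_add_one
  simp only [Function.comp_apply, ← mul_neg_geom_sum]
  field_simp
  congr 1
  exact tsum_congr fun n => by rw [mul_assoc, ← pow_succ', ← pow_mul, ← pow_mul, mul_comm n]

lemma summable_mul_pow_mul_eval (hb : ∀ n, |b n| ≤ B) (p : ℝ[X]) {x : ℝ} (hx0 : 0 ≤ x)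
    (hx1 : x < 1) : Summable fun n => b n * x ^ n * p.eval (x ^ n) := by
  obtain ⟨M, hM⟩ := (isCompact_Icc (a := (0 : ℝ)) (b := 1)).exists_bound_of_continuousOn
    p.continuous.continuousOn
  have hu : ∀ n, ‖b n * p.eval (x ^ n)‖ ≤ B * M := fun n => by
    rw [norm_mul, Real.norm_eq_abs]
    exact mul_le_mul (hb n) (hM _ ⟨pow_nonneg hx0 n, pow_le_one₀ hx0 hx1.le⟩) (norm_nonneg _)
      ((abs_nonneg _).trans (hb n))
  simpa only [mul_right_comm] using
    summable_mul_pow_of_norm_le hu (by rwa [Real.norm_of_nonneg hx0])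

lemma tendsto_one_sub_mul_tsum_mul_pow_mul_eval (hb : ∀ n, |b n| ≤ B)
    (hA : Tendsto (fun x => (1 - x) * ∑' n, b n * x ^ n) (𝓝[<] 1) (𝓝 L)) (p : ℝ[X]) :
    Tendsto (fun x => (1 - x) * ∑' n, b n * x ^ n * p.eval (x ^ n)) (𝓝[<] 1)
      (𝓝 (L * ∫ t in (0 : ℝ)..1, p.eval t)) := by
  induction p using Polynomial.induction_on' with
  | add p q hp hq =>
    simp only [eval_add]
    rw [intervalIntegral.integral_add (p.continuous.intervalIntegrable 0 1)
      (q.continuous.intervalIntegrable 0 1), mul_add]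
    refine (hp.add hq).congr' ?_
    filter_upwards [Ioo_mem_nhdsLT zero_lt_one] with x hx
    rw [← mul_add, ← (summable_mul_pow_mul_eval hb p hx.1.le hx.2).tsum_add
      (summable_mul_pow_mul_eval hb q hx.1.le hx.2)]
    simp only [mul_add]
  | monomial k a =>
    simp only [eval_monomial, intervalIntegral.integral_const_mul, integral_pow]
    have hlim := (tendsto_one_sub_mul_tsum_mul_pow_pow hA k).const_mul a
    have hval : a * (L / (k + 1)) = L * (a * ((1 ^ (k + 1) - 0 ^ (k + 1)) / (k + 1))) := by
      simp only [one_pow, ne_eq, Nat.add_one_ne_zero, not_false_eq_true, zero_pow, sub_zero]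
      ring
    rw [← hval]
    refine hlim.congr fun x => ?_
    rw [mul_left_comm, ← tsum_mul_left]
    exact congrArg _ (tsum_congr fun n => by ring)

lemma one_sub_inv_add_one_mem_Ico (N : ℕ) : 1 - ((N : ℝ) + 1)⁻¹ ∈ Set.Ico 0 1 :=
  ⟨sub_nonneg.2 (inv_le_one_of_one_le₀ (by simp)), sub_lt_self _ (by positivity)⟩

lemma tsum_mul_pow_mul_eval_le_sum_range (hb : ∀ n, |b n| ≤ B) (hb0 : ∀ n, 0 ≤ b n) {p : ℝ[X]}
    (hp : ∀ t ∈ Set.Icc (0 : ℝ) 1, p.eval t ≤ karamataKernel t) (N : ℕ) :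
    ∑' n, b n * (1 - ((N : ℝ) + 1)⁻¹) ^ n * p.eval ((1 - ((N : ℝ) + 1)⁻¹) ^ n)
      ≤ ∑ n ∈ range (N + 1), b n := by
  obtain ⟨hx0, hx1⟩ := one_sub_inv_add_one_mem_Ico N
  rw [← (hasSum_mul_pow_mul_karamataKernel b N).tsum_eq]
  refine (summable_mul_pow_mul_eval hb p hx0 hx1).tsum_le_tsum (fun n => ?_)
    (hasSum_mul_pow_mul_karamataKernel b N).summable
  exact mul_le_mul_of_nonneg_left (hp _ ⟨pow_nonneg hx0 n, pow_le_one₀ hx0 hx1.le⟩)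
    (mul_nonneg (hb0 n) (pow_nonneg hx0 n))

lemma sum_range_le_tsum_mul_pow_mul_eval (hb : ∀ n, |b n| ≤ B) (hb0 : ∀ n, 0 ≤ b n) {q : ℝ[X]}
    (hq : ∀ t ∈ Set.Icc (0 : ℝ) 1, karamataKernel t ≤ q.eval t) (N : ℕ) :
    ∑ n ∈ range (N + 1), b n
      ≤ ∑' n, b n * (1 - ((N : ℝ) + 1)⁻¹) ^ n * q.eval ((1 - ((N : ℝ) + 1)⁻¹) ^ n) := by
  obtain ⟨hx0, hx1⟩ := one_sub_inv_add_one_mem_Ico N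
  rw [← (hasSum_mul_pow_mul_karamataKernel b N).tsum_eq]
  refine (hasSum_mul_pow_mul_karamataKernel b N).summable.tsum_le_tsum (fun n => ?_)
    (summable_mul_pow_mul_eval hb q hx0 hx1)
  exact mul_le_mul_of_nonneg_left (hq _ ⟨pow_nonneg hx0 n, pow_le_one₀ hx0 hx1.le⟩)
    (mul_nonneg (hb0 n) (pow_nonneg hx0 n))

theorem tendsto_cesaro_of_tendsto_abel_of_nonneg (hb0 : ∀ n, 0 ≤ b n) (hbB : ∀ n, b n ≤ B)
    (hA : Tendsto (fun x => (1 - x) * ∑' n, b n * x ^ n) (𝓝[<] 1) (𝓝 L)) :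
    Tendsto (fun N : ℕ => (N : ℝ)⁻¹ * ∑ n ∈ range N, b n) atTop (𝓝 L) := by
  have hb : ∀ n, |b n| ≤ B := fun n => (abs_of_nonneg (hb0 n)).trans_le (hbB n)
  have hL : 0 ≤ L := ge_of_tendsto hA <| by
    filter_upwards [Ioo_mem_nhdsLT zero_lt_one] with x hx
    exact mul_nonneg (by linarith [hx.2])
      (tsum_nonneg fun n => mul_nonneg (hb0 n) (pow_nonneg hx.1.le n))
  have hx : Tendsto (fun N : ℕ => 1 - ((N : ℝ) + 1)⁻¹) atTop (𝓝[<] 1) :=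
    (tendsto_one_sub_inv_natCast_nhdsLT.comp (tendsto_add_atTop_nat 1)).congr fun N => by simp
  have hmean : ∀ N : ℕ, ((N + 1 : ℕ) : ℝ)⁻¹ * ∑ n ∈ range (N + 1), b n
      = (1 - (1 - ((N : ℝ) + 1)⁻¹)) * ∑ n ∈ range (N + 1), b n := fun N => by
    rw [sub_sub_cancel, Nat.cast_succ]
  have hmean_nonneg : ∀ N : ℕ, 0 ≤ 1 - (1 - ((N : ℝ) + 1)⁻¹) := fun N => by
    rw [sub_sub_cancel]
    positivity
  rw [← tendsto_add_atTop_iff_nat 1]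
  refine tendsto_order.2 ⟨fun l hl => ?_, fun u hu => ?_⟩
  · obtain ⟨p, hpK, hp⟩ := exists_polynomial_le_karamataKernel (ε := (L - l) / (L + 1))
      (by apply div_pos <;> linarith)
    have hlp : l < L * ∫ t in (0 : ℝ)..1, p.eval t := by
      have : L * ((L - l) / (L + 1)) < L - l := by
        rw [← mul_div_assoc, div_lt_iff₀ (by linarith)]
        nlinarith
      nlinarith [mul_le_mul_of_nonneg_left hp hL]
    filter_upwards [((tendsto_one_sub_mul_tsum_mul_pow_mul_eval hb hA p).comp hx).eventually
      (lt_mem_nhds hlp)] with N hN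
    rw [hmean]
    exact hN.trans_le (mul_le_mul_of_nonneg_left
      (tsum_mul_pow_mul_eval_le_sum_range hb hb0 hpK N) (hmean_nonneg N))
  · obtain ⟨q, hKq, hq⟩ := exists_polynomial_ge_karamataKernel (ε := (u - L) / (L + 1))
      (by apply div_pos <;> linarith)
    have hqu : L * ∫ t in (0 : ℝ)..1, q.eval t < u := by
      have : L * ((u - L) / (L + 1)) < u - L := by
        rw [← mul_div_assoc, div_lt_iff₀ (by linarith)]
        nlinarith
      nlinarith [mul_le_mul_of_nonneg_left hq hL]
    filter_upwards [((tendsto_one_sub_mul_tsum_mul_pow_mul_eval hb hA q).comp hx).eventually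
      (gt_mem_nhds hqu)] with N hN
    rw [hmean]
    exact (mul_le_mul_of_nonneg_left
      (sum_range_le_tsum_mul_pow_mul_eval hb hb0 hKq N) (hmean_nonneg N)).trans_lt hN

theorem tendsto_cesaro_of_tendsto_abel_of_abs_le (hb : ∀ n, |b n| ≤ B)
    (hA : Tendsto (fun x => (1 - x) * ∑' n, b n * x ^ n) (𝓝[<] 1) (𝓝 L)) :
    Tendsto (fun N : ℕ => (N : ℝ)⁻¹ * ∑ n ∈ range N, b n) atTop (𝓝 L) := by
  have hshift : Tendsto (fun x => (1 - x) * ∑' n, (b n + B) * x ^ n) (𝓝[<] 1) (𝓝 (L + B)) := by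
    refine (hA.add_const B).congr' ?_
    filter_upwards [Ioo_mem_nhdsLT zero_lt_one] with x hx
    have hx1 : 1 - x ≠ 0 := by linarith [hx.2]
    have hgeom := summable_geometric_of_lt_one hx.1.le hx.2
    simp only [add_mul]
    have hsum := summable_mul_pow_of_norm_le (u := b) hb (z := x)
      (by rw [Real.norm_of_nonneg hx.1.le]; exact hx.2)
    rw [hsum.tsum_add (hgeom.mul_left B), tsum_mul_left, tsum_geometric_of_lt_one hx.1.le hx.2]
    field_simp
  have := (tendsto_cesaro_of_tendsto_abel_of_nonneg (b := fun n => b n + B) (B := B + B)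
    (fun n => by linarith [neg_abs_le (b n), hb n]) (fun n => by linarith [le_abs_self (b n), hb n])
    hshift).sub_const B
  rw [add_sub_cancel_right] at this
  refine this.congr' ?_
  filter_upwards [eventually_gt_atTop 0] with N hN
  rw [sum_add_distrib, sum_const, card_range, nsmul_eq_mul, mul_add,
    inv_mul_cancel_left₀ (by positivity), add_sub_cancel_right]

end Karamata

theorem tendsto_cesaro_of_tendsto_abel {s : ℕ → ℂ} {M : ℝ} {a : ℂ} (hs : ∀ n, ‖s n‖ ≤ M)
    (hA : Tendsto (fun x : ℝ => (1 - (x : ℂ)) * ∑' n, s n * (x : ℂ) ^ n) (𝓝[<] 1) (𝓝 a)) :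
    Tendsto (fun N : ℕ => (N : ℝ)⁻¹ • ∑ n ∈ range N, s n) atTop (𝓝 a) := by
  have hℓ : ∀ ℓ : ℂ →L[ℝ] ℝ,
      Tendsto (fun N : ℕ => ℓ ((N : ℝ)⁻¹ • ∑ n ∈ range N, s n)) atTop (𝓝 (ℓ a)) := by
    intro ℓ
    simp only [map_smul, map_sum, smul_eq_mul]
    refine tendsto_cesaro_of_tendsto_abel_of_abs_le (B := ‖ℓ‖ * M)
      (fun n => (ℓ.le_opNorm _).trans (by gcongr; exact hs n))
      (((ℓ.continuous.tendsto a).comp hA).congr' ?_)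
    filter_upwards [Ioo_mem_nhdsLT zero_lt_one] with x hx
    have hsum : Summable fun n => (x ^ n : ℝ) • s n := by
      simpa [Complex.real_smul, mul_comm] using
        summable_mul_pow_of_norm_le hs (z := (x : ℂ)) (by simp [abs_of_pos hx.1, hx.2])
    have hrewrite :
        (1 - (x : ℂ)) * ∑' n, s n * (x : ℂ) ^ n = (1 - x) • ∑' n, (x ^ n : ℝ) • s n := by
      simp [Complex.real_smul, mul_comm]
    rw [Function.comp_apply, hrewrite, map_smul, ℓ.map_tsum hsum, smul_eq_mul]
    simp only [map_smul, smul_eq_mul, mul_comm]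
  convert (Complex.equivRealProdCLM.symm.continuous.tendsto (Complex.equivRealProdCLM a)).comp
    ((hℓ Complex.reCLM).prodMk_nhds (hℓ Complex.imCLM)) using 1
  · ext N
    exact (Complex.equivRealProdCLM.symm_apply_apply _).symm
  · rw [Complex.equivRealProdCLM.symm_apply_apply]

/-- Littlewood's Tauberian theorem: if `c n = O(1/n)` and the Abel means
`∑ c_n r^n` tend to `a` as `r → 1⁻`, then `∑ c_n` converges to `a`. -/
theorem littlewood_tauberian (c : ℕ → ℂ) (a : ℂ)
    (hbound : ∃ C : ℝ, ∀ n : ℕ, 1 ≤ n → ‖c n‖ ≤ C / n)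
    (habel : Tendsto (fun r : ℝ => ∑' n : ℕ, c n * (r : ℂ) ^ n)
      (nhdsWithin 1 (Set.Iio 1)) (nhds a)) :
    Tendsto (fun N : ℕ => ∑ n ∈ Finset.range N, c n) atTop (nhds a) := by
  obtain ⟨C, hC⟩ := hbound
  obtain ⟨M, hM⟩ := exists_norm_sum_range_le hC habel
  refine tendsto_sum_range_of_tendsto_cesaro hC (tendsto_cesaro_of_tendsto_abel hM ?_)
  have hlim : Tendsto (fun x : ℝ => (x : ℂ) * ∑' n, c n * (x : ℂ) ^ n) (𝓝[<] 1) (𝓝 a) := by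
    simpa using ((Complex.continuous_ofReal.tendsto 1).mono_left nhdsWithin_le_nhds).mul habel
  refine hlim.congr' ?_
  filter_upwards [Ioo_mem_nhdsLT zero_lt_one] with x hx
  rw [one_sub_mul_tsum_sum_range_mul_pow
    (summable_mul_pow_of_norm_le hM (by simp [abs_of_pos hx.1, hx.2]))]
end

section
/- For the Gauss map α(x) = {1/x} on X = (0,1)\ℚ, a number x ∈ X is a Wilton number if and only if α(x) is a Wilton number, and in that case W(x) = log(1/x) - x·W(α(x)). -/
open Real Filter Finset

/-- The Gauss map `α(x) = {1/x}`. -/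
noncomputable def gaussMap (x : ℝ) : ℝ := Int.fract (1 / x)

/-- `γ_k(x) = β_{k-1}(x) · log(1/α_k(x))`, where `β_{k-1}(x) = ∏_{i<k} α_i(x)`
and `α_k` is the `k`-th iterate of the Gauss map. -/
noncomputable def wiltonTerm (x : ℝ) (k : ℕ) : ℝ :=
  (∏ i ∈ Finset.range k, gaussMap^[i] x) * Real.log (1 / gaussMap^[k] x)

/-- `x` is a Wilton number if `∑_{k≥0} (-1)^k γ_k(x)` converges. -/
def IsWilton (x : ℝ) : Prop :=
  ∃ w : ℝ, Tendsto (fun K : ℕ => ∑ k ∈ Finset.range K, (-1 : ℝ) ^ k * wiltonTerm x k)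
    atTop (nhds w)

/-! Shifting the index, `γ_{k+1}(x) = x · γ_k(α(x))`, so the partial sums satisfy
`S_{K+1}(x) = log(1/x) - x · S_K(α(x))`. Since `x ≠ 0`, this affine relation transfers
convergence in both directions and forces the limits to be related in the same way. -/

open Topology

noncomputable def wiltonPartialSum (x : ℝ) (K : ℕ) : ℝ :=
  ∑ k ∈ range K, (-1 : ℝ) ^ k * wiltonTerm x k

lemma wiltonTerm_zero (x : ℝ) : wiltonTerm x 0 = log (1 / x) := by
  simp [wiltonTerm]

lemma wiltonTerm_succ (x : ℝ) (k : ℕ) :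
    wiltonTerm x (k + 1) = x * wiltonTerm (gaussMap x) k := by
  simp only [wiltonTerm, prod_range_succ', Function.iterate_succ_apply,
    Function.iterate_zero_apply]
  ring

lemma wiltonPartialSum_succ (x : ℝ) (K : ℕ) :
    wiltonPartialSum x (K + 1) = log (1 / x) - x * wiltonPartialSum (gaussMap x) K := by
  simp only [wiltonPartialSum, sum_range_succ', wiltonTerm_succ, wiltonTerm_zero, mul_sum,
    pow_succ]
  rw [sub_eq_neg_add, ← sum_neg_distrib]
  congr 1
  · exact sum_congr rfl fun k _ ↦ by ring
  · ring

lemma tendsto_wiltonPartialSum_iff {x : ℝ} (hx : x ≠ 0) {w' : ℝ} :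
    Tendsto (wiltonPartialSum x) atTop (𝓝 (log (1 / x) - x * w')) ↔
      Tendsto (wiltonPartialSum (gaussMap x)) atTop (𝓝 w') := by
  rw [← tendsto_add_atTop_iff_nat 1]
  simp_rw [wiltonPartialSum_succ, tendsto_const_sub_iff, ← smul_eq_mul]
  exact tendsto_const_smul_iff₀ hx

theorem wilton_iff_gaussMap_wilton_general (x : ℝ) (hx0 : 0 < x) :
    (IsWilton x ↔ IsWilton (gaussMap x)) ∧
    ∀ w w' : ℝ,
      Tendsto (fun K : ℕ => ∑ k ∈ Finset.range K, (-1 : ℝ) ^ k * wiltonTerm x k)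
        atTop (nhds w) →
      Tendsto (fun K : ℕ => ∑ k ∈ Finset.range K,
          (-1 : ℝ) ^ k * wiltonTerm (gaussMap x) k) atTop (nhds w') →
      w = Real.log (1 / x) - x * w' := by
  have hx : x ≠ 0 := hx0.ne'
  refine ⟨⟨?_, ?_⟩, fun w w' hw hw' ↦
    tendsto_nhds_unique hw ((tendsto_wiltonPartialSum_iff hx).mpr hw')⟩
  · rintro ⟨w, hw⟩
    refine ⟨(log (1 / x) - w) / x, (tendsto_wiltonPartialSum_iff hx).mp ?_⟩
    rwa [mul_div_cancel₀ _ hx, sub_sub_cancel]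
  · rintro ⟨w', hw'⟩
    exact ⟨_, (tendsto_wiltonPartialSum_iff hx).mpr hw'⟩

/-- For irrational `x ∈ (0,1)`: `x` is a Wilton number iff `α(x)` is a Wilton number,
and in that case `W(x) = log(1/x) - x · W(α(x))`. -/
theorem wilton_iff_gaussMap_wilton (x : ℝ) (hx0 : 0 < x) (hx1 : x < 1)
    (hirr : Irrational x) :
    (IsWilton x ↔ IsWilton (gaussMap x)) ∧
    ∀ w w' : ℝ,
      Tendsto (fun K : ℕ => ∑ k ∈ Finset.range K, (-1 : ℝ) ^ k * wiltonTerm x k)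
        atTop (nhds w) →
      Tendsto (fun K : ℕ => ∑ k ∈ Finset.range K,
          (-1 : ℝ) ^ k * wiltonTerm (gaussMap x) k) atTop (nhds w') →
      w = Real.log (1 / x) - x * w' :=
  wilton_iff_gaussMap_wilton_general x hx0
end

section
/- Euler–Maclaurin summation formula with remainder: for f that is (2N+1) times continuously differentiable on [0, Z] with Z a positive integer, ∑_{ν=0}^{Z} f(ν) = (f(0)+f(Z))/2 + ∫₀^Z f(u) du + ∑_{j=1}^{N} (B_{2j}/(2j)!)·(f^{(2j-1)}(Z) - f^{(2j-1)}(0)) + r_N(f, Z), where r_N(f,Z) = (1/(2N+1)!)·∫₀^Z P_{2N+1}(u - ⌊u⌋)·f^{(2N+1)}(u) du and P_{2N+1} is the (2N+1)-st Bernoulli polynomial evaluated at the fractional part. -/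
/-!
Integrating by parts against `B_{m+1}(u - k)` on each cell `[k, k + 1]` and using
`B_{m+1}' = (m + 1) B_m` gives, for `g` with derivative `g'`,
`(m + 1) ∫₀^Z B_m({u}) g + ∫₀^Z B_{m+1}({u}) g' = ∑ₖ (B_{m+1}(1) g(k + 1) - B_{m+1}(0) g(k))`.
For `m = 0` the right-hand side is the trapezoidal sum; for `m ≥ 1` it telescopes to
`B_{m+1} (g(Z) - g(0))` because `B_{m+1}(1) = B_{m+1}(0)`. With `g = f⁽ᵐ⁾` and the remainders
`R_m = (1/m!) ∫₀^Z B_m({u}) f⁽ᵐ⁾(u) du` this reads `R_m + R_{m+1} = B_{m+1}/(m+1)! · Δf⁽ᵐ⁾`,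
where `Δh = h(Z) - h(0)`.
Since `B_{2j+1} = 0` for `j ≥ 1`, each even remainder cancels against the next odd one, and
`R_1 = ∑_{j ≤ N} B_{2j}/(2j)! · Δf⁽²ʲ⁻¹⁾ + R_{2N+1}`.
-/

open Finset MeasureTheory Set intervalIntegral
open scoped Nat

theorem integral_bernoulliFun_sub_mul_deriv (m : ℕ) (k : ℝ) {g g' : ℝ → ℝ}
    (hg : ContinuousOn g (Icc k (k + 1))) (hg' : IntervalIntegrable g' volume k (k + 1))
    (hderiv : ∀ x ∈ Ioo k (k + 1), HasDerivAt g (g' x) x) :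
    ∫ u in k..k + 1, bernoulliFun (m + 1) (u - k) * g' u =
      bernoulliFun (m + 1) 1 * g (k + 1) - bernoulliFun (m + 1) 0 * g k
        - (m + 1) * ∫ u in k..k + 1, bernoulliFun m (u - k) * g u := by
  have hk : k ≤ k + 1 := by linarith
  have hBc (j : ℕ) : Continuous fun u => bernoulliFun j (u - k) :=
    (continuous_bernoulliFun j).comp (continuous_sub_right k)
  have hB (x : ℝ) : HasDerivAt (fun u => bernoulliFun (m + 1) (u - k))
      ((m + 1) * bernoulliFun m (x - k)) x := by
    simpa using (hasDerivAt_bernoulliFun (m + 1) (x - k)).comp_sub_const x k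
  rw [integral_mul_deriv_eq_deriv_mul_of_hasDerivAt (hBc (m + 1)).continuousOn
    (by rwa [Set.uIcc_of_le hk]) (fun x _ => hB x) (by simpa [hk] using hderiv)
    ((continuous_const.mul (hBc m)).intervalIntegrable _ _) hg']
  simp only [sub_self, add_sub_cancel_left, ← intervalIntegral.integral_const_mul, mul_assoc]

theorem integral_comp_fract_mul_eq_sum {P h : ℝ → ℝ} (hP : Continuous P) {Z : ℕ}
    (hh : ContinuousOn h (Icc 0 Z)) :
    ∫ u in (0 : ℝ)..Z, P (Int.fract u) * h u =
      ∑ k ∈ range Z, ∫ u in (k : ℝ)..k + 1, P (u - k) * h u := by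
  have hfract {k : ℕ} : EqOn (fun u => P (u - k) * h u) (fun u => P (Int.fract u) * h u)
      (uIoo (k : ℝ) (k + 1)) := by
    intro u hu
    rw [uIoo_of_le (by linarith)] at hu
    have : Int.fract u = u - k := by
      rw [← Int.fract_sub_natCast u k, Int.fract_eq_self]
      constructor <;> linarith [hu.1, hu.2]
    simp only [this]
  have hcell {k : ℕ} (hk : k < Z) :
      IntervalIntegrable (fun u => P (u - k) * h u) volume (k : ℝ) (k + 1) := by
    refine ((hP.comp (continuous_sub_right _)).continuousOn.mul (hh.mono ?_)).intervalIntegrable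
    rw [Set.uIcc_of_le (by linarith)]
    exact Icc_subset_Icc (by positivity) (by exact_mod_cast hk)
  rw [← Nat.cast_zero, ← sum_integral_adjacent_intervals
    (fun k hk => by simpa using (hcell hk).congr_uIoo hfract)]
  refine sum_congr rfl fun k _ => ?_
  simpa using (integral_congr_uIoo hfract).symm

theorem integral_bernoulliFun_fract_mul_add (m : ℕ) {Z : ℕ} {g g' : ℝ → ℝ}
    (hg : ContinuousOn g (Icc 0 Z)) (hg' : ContinuousOn g' (Icc 0 Z))
    (hderiv : ∀ x ∈ Ioo (0 : ℝ) Z, HasDerivAt g (g' x) x) :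
    (m + 1) * (∫ u in (0 : ℝ)..Z, bernoulliFun m (Int.fract u) * g u)
      + ∫ u in (0 : ℝ)..Z, bernoulliFun (m + 1) (Int.fract u) * g' u
      = ∑ k ∈ range Z, (bernoulliFun (m + 1) 1 * g (k + 1) - bernoulliFun (m + 1) 0 * g k) := by
  rw [integral_comp_fract_mul_eq_sum (continuous_bernoulliFun _) hg,
    integral_comp_fract_mul_eq_sum (continuous_bernoulliFun _) hg', mul_sum, ← sum_add_distrib]
  refine sum_congr rfl fun k hk => ?_
  have hcell : Icc (k : ℝ) (k + 1) ⊆ Icc 0 Z :=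
    Icc_subset_Icc (by positivity) (by exact_mod_cast mem_range.mp hk)
  have hcell' : Ioo (k : ℝ) (k + 1) ⊆ Ioo 0 Z :=
    Ioo_subset_Ioo (by positivity) (by exact_mod_cast mem_range.mp hk)
  rw [integral_bernoulliFun_sub_mul_deriv m k (hg.mono hcell)
    ((hg'.mono hcell).intervalIntegrable_of_Icc (by linarith)) fun x hx => hderiv x (hcell' hx)]
  ring

theorem integral_add_integral_bernoulliFun_one_fract_mul {Z : ℕ} {g g' : ℝ → ℝ}
    (hg : ContinuousOn g (Icc 0 Z)) (hg' : ContinuousOn g' (Icc 0 Z))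
    (hderiv : ∀ x ∈ Ioo (0 : ℝ) Z, HasDerivAt g (g' x) x) :
    (∫ u in (0 : ℝ)..Z, g u) + ∫ u in (0 : ℝ)..Z, bernoulliFun 1 (Int.fract u) * g' u
      = ∑ ν ∈ range (Z + 1), g ν - (g 0 + g Z) / 2 := by
  have h := integral_bernoulliFun_fract_mul_add 0 hg hg' hderiv
  have htrapezoid (a b : ℝ) : bernoulliFun 1 1 * a - bernoulliFun 1 0 * b = (a + b) / 2 := by
    simp only [bernoulliFun_one]
    ring
  simp only [bernoulliFun_zero, one_mul, zero_add, Nat.cast_zero, htrapezoid] at h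
  have htop := sum_range_succ (fun ν : ℕ => g ν) Z
  have hbot := sum_range_succ' (fun ν : ℕ => g ν) Z
  push_cast at htop hbot
  rw [h, ← sum_div, sum_add_distrib]
  linear_combination -(htop + hbot) / 2

theorem integral_bernoulliFun_fract_mul_add_of_one_le {m : ℕ} (hm : 1 ≤ m) {Z : ℕ} {g g' : ℝ → ℝ}
    (hg : ContinuousOn g (Icc 0 Z)) (hg' : ContinuousOn g' (Icc 0 Z))
    (hderiv : ∀ x ∈ Ioo (0 : ℝ) Z, HasDerivAt g (g' x) x) :
    (m + 1) * (∫ u in (0 : ℝ)..Z, bernoulliFun m (Int.fract u) * g u)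
      + ∫ u in (0 : ℝ)..Z, bernoulliFun (m + 1) (Int.fract u) * g' u
      = bernoulli (m + 1) * (g Z - g 0) := by
  rw [integral_bernoulliFun_fract_mul_add m hg hg' hderiv,
    bernoulliFun_endpoints_eq_of_ne_one (by omega), bernoulliFun_eval_zero]
  simp_rw [← mul_sub]
  rw [← mul_sum]
  congr 1
  simpa using sum_range_sub (fun k : ℕ => g k) Z

theorem ContDiffOn.hasDerivAt_iteratedDerivWithin {𝕜 F : Type*} [NontriviallyNormedField 𝕜]
    [NormedAddCommGroup F] [NormedSpace 𝕜 F] {n : WithTop ℕ∞} {f : 𝕜 → F} {s : Set 𝕜}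
    {m : ℕ} {x : 𝕜} (hf : ContDiffOn 𝕜 n f s) (hs : UniqueDiffOn 𝕜 s) (hm : m < n)
    (hx : s ∈ nhds x) :
    HasDerivAt (iteratedDerivWithin m f s) (iteratedDerivWithin (m + 1) f s x) x := by
  rw [iteratedDerivWithin_succ]
  exact ((hf.differentiableOn_iteratedDerivWithin hm hs) x
    (mem_of_mem_nhds hx)).hasDerivWithinAt.hasDerivAt hx

theorem eq_sum_add_of_add_succ_eq {M : Type*} [AddCommGroup M] {S c : ℕ → M} (N : ℕ)
    (hS : ∀ m, 1 ≤ m → m ≤ 2 * N → S m + S (m + 1) = c (m + 1))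
    (hc : ∀ j, 1 ≤ j → j ≤ N → c (2 * j + 1) = 0) :
    S 1 = ∑ j ∈ Icc 1 N, c (2 * j) + S (2 * N + 1) := by
  induction N with
  | zero => simp
  | succ N ih =>
    have hodd : S (2 * N + 1) + S (2 * (N + 1)) = c (2 * (N + 1)) :=
      hS (2 * N + 1) (by omega) (by omega)
    have heven : S (2 * (N + 1)) + S (2 * (N + 1) + 1) = 0 := by
      rw [hS (2 * (N + 1)) (by omega) le_rfl, hc (N + 1) (by omega) le_rfl]
    rw [ih (fun m hm1 hm => hS m hm1 (by omega)) (fun j hj1 hj => hc j hj1 (by omega)),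
      sum_Icc_succ_top (by omega), ← hodd, add_assoc, add_assoc, heven, add_zero]

noncomputable def eulerMaclaurinRemainder (f : ℝ → ℝ) (Z m : ℕ) : ℝ :=
  1 / (m ! : ℝ) *
    ∫ u in (0 : ℝ)..Z, bernoulliFun m (Int.fract u) * iteratedDerivWithin m f (Icc 0 Z) u

section Remainder

variable {f : ℝ → ℝ} {Z : ℕ} {n : WithTop ℕ∞}

theorem sum_range_succ_eq_trapezoid_add_eulerMaclaurinRemainder (hZ : 0 < Z)
    (hf : ContDiffOn ℝ n f (Icc 0 Z)) (hn : 1 ≤ n) :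
    ∑ ν ∈ range (Z + 1), f ν =
      (f 0 + f Z) / 2 + (∫ u in (0 : ℝ)..Z, f u) + eulerMaclaurinRemainder f Z 1 := by
  have hs : UniqueDiffOn ℝ (Icc (0 : ℝ) Z) := uniqueDiffOn_Icc (by exact_mod_cast hZ)
  have h := integral_add_integral_bernoulliFun_one_fract_mul
    (hf.continuousOn_iteratedDerivWithin (m := 0) (by simp) hs)
    (hf.continuousOn_iteratedDerivWithin (m := 1) (by exact_mod_cast hn) hs)
    fun x hx => hf.hasDerivAt_iteratedDerivWithin (m := 0) hs (zero_lt_one.trans_le hn)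
      (Icc_mem_nhds hx.1 hx.2)
  simp only [iteratedDerivWithin_zero] at h
  rw [eulerMaclaurinRemainder]
  simp only [Nat.factorial_one, Nat.cast_one, div_one, one_mul]
  linarith

theorem eulerMaclaurinRemainder_add_succ (hZ : 0 < Z) (hf : ContDiffOn ℝ n f (Icc 0 Z))
    {m : ℕ} (hm1 : 1 ≤ m) (hm : m + 1 ≤ n) :
    eulerMaclaurinRemainder f Z m + eulerMaclaurinRemainder f Z (m + 1) =
      bernoulli (m + 1) / (m + 1)! *
        (iteratedDerivWithin m f (Icc 0 Z) Z - iteratedDerivWithin m f (Icc 0 Z) 0) := by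
  have hs : UniqueDiffOn ℝ (Icc (0 : ℝ) Z) := uniqueDiffOn_Icc (by exact_mod_cast hZ)
  have h := integral_bernoulliFun_fract_mul_add_of_one_le hm1
    (hf.continuousOn_iteratedDerivWithin (le_trans (by norm_cast; omega) hm) hs)
    (hf.continuousOn_iteratedDerivWithin hm hs)
    fun x hx => hf.hasDerivAt_iteratedDerivWithin hs (lt_of_lt_of_le (by norm_cast; omega) hm)
      (Icc_mem_nhds hx.1 hx.2)
  simp only [eulerMaclaurinRemainder, Nat.factorial_succ]
  push_cast
  field_simp
  linear_combination h

end Remainder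

/-- Euler–Maclaurin summation formula with remainder: for `f` that is `(2N+1)` times
continuously differentiable on `[0, Z]`,
`∑_{ν=0}^{Z} f(ν) = (f(0)+f(Z))/2 + ∫₀^Z f + ∑_{j=1}^N (B_{2j}/(2j)!)(f^{(2j-1)}(Z) -
f^{(2j-1)}(0)) + r_N(f,Z)` where
`r_N(f,Z) = (1/(2N+1)!) ∫₀^Z B_{2N+1}({u}) f^{(2N+1)}(u) du`. -/
theorem euler_maclaurin (N : ℕ) (Z : ℕ) (hZ : 0 < Z) (f : ℝ → ℝ)
    (hf : ContDiffOn ℝ (2 * N + 1) f (Set.Icc 0 (Z : ℝ))) :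
    ∑ ν ∈ Finset.range (Z + 1), f ν =
      (f 0 + f Z) / 2 + (∫ u in (0 : ℝ)..(Z : ℝ), f u)
      + ∑ j ∈ Finset.Icc 1 N,
          ((bernoulli (2 * j) : ℝ) / (Nat.factorial (2 * j)))
            * (iteratedDerivWithin (2 * j - 1) f (Set.Icc 0 (Z : ℝ)) Z
               - iteratedDerivWithin (2 * j - 1) f (Set.Icc 0 (Z : ℝ)) 0)
      + (1 / (Nat.factorial (2 * N + 1) : ℝ)) *
          ∫ u in (0 : ℝ)..(Z : ℝ),
            (Polynomial.map (algebraMap ℚ ℝ) (Polynomial.bernoulli (2 * N + 1))).eval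
                (Int.fract u)
              * iteratedDerivWithin (2 * N + 1) f (Set.Icc 0 (Z : ℝ)) u := by
  rw [sum_range_succ_eq_trapezoid_add_eulerMaclaurinRemainder hZ hf (by norm_cast; omega),
    eq_sum_add_of_add_succ_eq N (c := fun k => (bernoulli k : ℝ) / k ! *
      (iteratedDerivWithin (k - 1) f (Icc 0 Z) Z - iteratedDerivWithin (k - 1) f (Icc 0 Z) 0))
      (fun m hm1 hm => eulerMaclaurinRemainder_add_succ hZ hf hm1 (by norm_cast; omega))
      (fun j hj _ => by
        rw [bernoulli_eq_zero_of_odd (odd_two_mul_add_one j) (by omega), Rat.cast_zero,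
          zero_div, zero_mul])]
  rw [← add_assoc]
  -- `bernoulliFun k x` is by definition the evaluation of the Bernoulli polynomial in the statement
  rfl
end
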